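/- arXiv:2004.12048 — 6 statements merged into one kernel-verified Lean document; each statement's English description precedes it below -/
import Mathlib

section
/- For every positive integer r, the normalized double sum g(r) = (1/2^r) Σ_{m=1}^{2^r} Σ_{n=1}^{2^r} e^{2πi(m²+n²+mn)/2^r} equals -1 if r is odd and 1 if r is even. -/
open Complex Finset

noncomputable def ee (r k : ℕ) : ℂ :=
  Complex.exp (2 * Real.pi * Complex.I * k / 2 ^ r)

lemma ee_add (r k j : ℕ) : ee r (k + 2 ^ r * j) = ee r k := by
  unfold ee
  have h : (2 * Real.pi * Complex.I * ((k : ℂ) + 2 ^ r * j) / 2 ^ r)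
      = 2 * Real.pi * Complex.I * k / 2 ^ r + j * (2 * Real.pi * Complex.I) := by
    have : (2 : ℂ) ^ r ≠ 0 := pow_ne_zero _ two_ne_zero
    field_simp
  push_cast
  rw [h, Complex.exp_add]
  have : ((j : ℂ)) = ((j : ℤ) : ℂ) := by push_cast; ring
  rw [this, Complex.exp_int_mul_two_pi_mul_I, mul_one]

lemma ee_half (r k j : ℕ) : ee (r+1) (k + 2 ^ r * j) = ee (r+1) k * (-1) ^ j := by
  unfold ee
  have h : (2 * Real.pi * Complex.I * ((k : ℂ) + 2 ^ r * j) / 2 ^ (r+1))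
      = 2 * Real.pi * Complex.I * k / 2 ^ (r+1) + j * (Real.pi * Complex.I) := by
    have : (2 : ℂ) ^ (r+1) ≠ 0 := pow_ne_zero _ two_ne_zero
    rw [pow_succ]
    field_simp
  push_cast
  rw [h, Complex.exp_add, Complex.exp_nat_mul, Complex.exp_pi_mul_I]

lemma ee_four (r k : ℕ) : ee (r+2) (4 * k) = ee r k := by
  unfold ee
  congr 1
  have h2 : (2 : ℂ) ^ r ≠ 0 := pow_ne_zero _ two_ne_zero
  have : (2:ℂ) ^ (r+2) = 2 ^ r * 4 := by ring
  rw [this]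
  push_cast
  field_simp

lemma sum_range_two_mul (f : ℕ → ℂ) (n : ℕ) :
    ∑ i ∈ Finset.range (2*n), f i = ∑ a ∈ Finset.range n, (f (2*a) + f (2*a+1)) := by
  induction n with
  | zero => simp
  | succ n ih =>
      have : 2 * (n+1) = (2*n) + 1 + 1 := by ring
      rw [this, Finset.sum_range_succ, Finset.sum_range_succ, ih, Finset.sum_range_succ]
      ring

noncomputable def S (r : ℕ) : ℂ :=
  ∑ m ∈ Finset.range (2^r), ∑ n ∈ Finset.range (2^r), ee r (m^2 + n^2 + m*n)

lemma key (r u v s t : ℕ) :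
    ee (r+2) ((u + 2^(r+1)*s)^2 + (v + 2^(r+1)*t)^2 + (u + 2^(r+1)*s)*(v + 2^(r+1)*t))
      = ee (r+2) (u^2 + v^2 + u*v) * (-1)^(s*v + t*u) := by
  have hQ : (u + 2^(r+1)*s)^2 + (v + 2^(r+1)*t)^2 + (u + 2^(r+1)*s)*(v + 2^(r+1)*t)
      = (u^2 + v^2 + u*v + 2^(r+1)*(s*(2*u+v) + t*(2*v+u))) + 2^(r+2)*(2^r*(s^2+s*t+t^2)) := by
    have h1 : (2:ℕ)^(r+1) = 2 * 2^r := by rw [pow_succ]; ring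
    have h2 : (2:ℕ)^(r+2) = 4 * 2^r := by rw [pow_succ, pow_succ]; ring
    rw [h1, h2]; ring
  rw [hQ, ee_add, ee_half]
  congr 1
  have h : s*(2*u+v) + t*(2*v+u) = (s*v + t*u) + 2*(s*u + t*v) := by ring
  rw [h, pow_add, pow_mul]
  norm_num

lemma key01 (r u v : ℕ) :
    ee (r+2) (u^2 + (2^(r+1)+v)^2 + u*(2^(r+1)+v))
      = ee (r+2) (u^2 + v^2 + u*v) * (-1)^u := by
  have h : u^2 + (2^(r+1)+v)^2 + u*(2^(r+1)+v)
      = (u + 2^(r+1)*0)^2 + (v + 2^(r+1)*1)^2 + (u + 2^(r+1)*0)*(v + 2^(r+1)*1) := by ring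
  rw [h, key]; norm_num

lemma key10 (r u v : ℕ) :
    ee (r+2) ((2^(r+1)+u)^2 + v^2 + (2^(r+1)+u)*v)
      = ee (r+2) (u^2 + v^2 + u*v) * (-1)^v := by
  have h : (2^(r+1)+u)^2 + v^2 + (2^(r+1)+u)*v
      = (u + 2^(r+1)*1)^2 + (v + 2^(r+1)*0)^2 + (u + 2^(r+1)*1)*(v + 2^(r+1)*0) := by ring
  rw [h, key]; norm_num

lemma key11 (r u v : ℕ) :
    ee (r+2) ((2^(r+1)+u)^2 + (2^(r+1)+v)^2 + (2^(r+1)+u)*(2^(r+1)+v))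
      = ee (r+2) (u^2 + v^2 + u*v) * ((-1)^u * (-1)^v) := by
  have h : (2^(r+1)+u)^2 + (2^(r+1)+v)^2 + (2^(r+1)+u)*(2^(r+1)+v)
      = (u + 2^(r+1)*1)^2 + (v + 2^(r+1)*1)^2 + (u + 2^(r+1)*1)*(v + 2^(r+1)*1) := by ring
  rw [h, key, pow_add]; norm_num [mul_comm]

lemma S_rec (r : ℕ) : S (r+2) = 4 * S r := by
  have hsplit : S (r+2) = ∑ u ∈ Finset.range (2^(r+1)), ∑ v ∈ Finset.range (2^(r+1)),
      ee (r+2) (u^2+v^2+u*v) * ((1 + (-1)^u) * (1 + (-1)^v)) := by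
    unfold S
    have h2 : (2:ℕ)^(r+2) = 2^(r+1) + 2^(r+1) := by ring
    rw [h2, Finset.sum_range_add, ← Finset.sum_add_distrib]
    refine Finset.sum_congr rfl fun u _ => ?_
    rw [Finset.sum_range_add, Finset.sum_range_add, ← Finset.sum_add_distrib,
      ← Finset.sum_add_distrib, ← Finset.sum_add_distrib]
    refine Finset.sum_congr rfl fun v _ => ?_
    rw [key01, key10, key11]
    ring
  rw [hsplit]
  have hH2 : (2:ℕ)^(r+1) = 2 * 2^r := by rw [pow_succ]; ring
  rw [hH2, sum_range_two_mul]
  unfold S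
  rw [Finset.mul_sum]
  refine Finset.sum_congr rfl fun a _ => ?_
  rw [sum_range_two_mul, sum_range_two_mul, ← Finset.sum_add_distrib, Finset.mul_sum]
  refine Finset.sum_congr rfl fun b _ => ?_
  rw [show (2*a)^2+(2*b)^2+(2*a)*(2*b) = 4*(a^2+b^2+a*b) from by ring, ee_four]
  simp only [pow_add, pow_mul, neg_one_sq, one_pow, pow_one]
  ring

lemma S_zero : S 0 = 1 := by
  unfold S ee
  norm_num

lemma S_one : S 1 = -2 := by
  have h : ∀ k : ℕ, ee 1 k = (-1)^k := by
    intro k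
    unfold ee
    have : (2 * Real.pi * Complex.I * (k:ℂ) / 2 ^ 1) = k * (Real.pi * Complex.I) := by
      ring
    rw [this, Complex.exp_nat_mul, Complex.exp_pi_mul_I]
  unfold S
  norm_num [h, Finset.sum_range_succ]

lemma S_eq (r : ℕ) : S r = (-2)^r := by
  induction r using Nat.strong_induction_on with
  | _ r ih =>
    match r with
    | 0 => simpa using S_zero
    | 1 => simpa using S_one
    | (n+2) =>
        rw [S_rec, ih n (by omega)]
        ring

/-- For every positive integer `r`, the normalized double sum
`g(r) = (1/2^r) Σ_{m=1}^{2^r} Σ_{n=1}^{2^r} e^{2πi(m²+n²+mn)/2^r}` equals `-1`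
if `r` is odd and `1` if `r` is even. -/
theorem stmt_7 (r : ℕ) (hr : 1 ≤ r) :
    (1 / (2 ^ r : ℂ)) *
      ∑ m ∈ Finset.Icc 1 (2 ^ r : ℕ), ∑ n ∈ Finset.Icc 1 (2 ^ r : ℕ),
        Complex.exp (2 * Real.pi * Complex.I *
          ((m : ℂ) ^ 2 + (n : ℂ) ^ 2 + (m : ℂ) * (n : ℂ)) / (2 ^ r : ℂ)) =
      if Odd r then -1 else 1 := by
  set N := 2^r with hN
  have hN1 : 1 ≤ N := Nat.one_le_two_pow
  have hterm : ∀ m n : ℕ, Complex.exp (2 * Real.pi * Complex.I *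
      ((m : ℂ) ^ 2 + (n : ℂ) ^ 2 + (m : ℂ) * (n : ℂ)) / (2 ^ r : ℂ))
      = ee r (m^2 + n^2 + m*n) := by
    intro m n
    unfold ee
    push_cast
    ring_nf
  -- convert a sum over Icc 1 N to a sum over range N using periodicity
  have hshift : ∀ F : ℕ → ℂ, F N = F 0 →
      ∑ m ∈ Finset.Icc 1 N, F m = ∑ m ∈ Finset.range N, F m := by
    intro F hF
    rw [show Finset.Icc 1 N = Finset.Ico 1 (N+1) from rfl,
      Finset.sum_Ico_succ_top hN1, Finset.range_eq_Ico,
      Finset.sum_eq_sum_Ico_succ_bot (by omega : 0 < N), hF]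
    ring
  have hsum : ∑ m ∈ Finset.Icc 1 N, ∑ n ∈ Finset.Icc 1 N, ee r (m^2+n^2+m*n)
      = S r := by
    have hinner : ∀ m : ℕ, ∑ n ∈ Finset.Icc 1 N, ee r (m^2+n^2+m*n)
        = ∑ n ∈ Finset.range N, ee r (m^2+n^2+m*n) := by
      intro m
      refine hshift _ ?_
      have h : m^2 + N^2 + m*N = (m^2 + 0^2 + m*0) + 2^r * (2^r + m) := by
        rw [hN]; ring
      rw [h, ee_add]
    calc ∑ m ∈ Finset.Icc 1 N, ∑ n ∈ Finset.Icc 1 N, ee r (m^2+n^2+m*n)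
        = ∑ m ∈ Finset.Icc 1 N, ∑ n ∈ Finset.range N, ee r (m^2+n^2+m*n) :=
          Finset.sum_congr rfl fun m _ => hinner m
      _ = ∑ m ∈ Finset.range N, ∑ n ∈ Finset.range N, ee r (m^2+n^2+m*n) := by
          refine hshift _ ?_
          refine Finset.sum_congr rfl fun n _ => ?_
          have h : N^2 + n^2 + N*n = (0^2 + n^2 + 0*n) + 2^r * (2^r + n) := by
            rw [hN]; ring
          rw [h, ee_add]
      _ = S r := rfl
  simp only [hterm]
  rw [hsum, S_eq]
  have h2 : (2:ℂ)^r ≠ 0 := pow_ne_zero _ two_ne_zero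
  have : ((-2:ℂ))^r = (-1)^r * 2^r := by rw [show (-2:ℂ) = (-1) * 2 from by ring, mul_pow]
  rw [this]
  rw [one_div, inv_mul_eq_div, mul_div_assoc, div_self h2, mul_one]
  rcases Nat.even_or_odd r with he | ho
  · rw [if_neg (by simpa using he), he.neg_one_pow]
  · rw [if_pos ho, ho.neg_one_pow]
end

section
/- For r ≥ 1, (1/2^{r/2}) Σ_{j=1}^{2^r} e^{2πi j²/2^{r+1}} = e^{πi/4}. -/
open Complex Finset

noncomputable def gterm (r j : ℕ) : ℂ :=
  Complex.exp (Real.pi * Complex.I * (j : ℂ) ^ 2 / (2 ^ r : ℂ))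

noncomputable def gsum (r : ℕ) : ℂ := ∑ j ∈ Finset.Ioc 0 (2 ^ r), gterm r j

lemma exp_pi_div_four : Complex.exp (Real.pi * Complex.I / 4) =
    (Real.sqrt 2 / 2 : ℝ) * (1 + Complex.I) := by
  have h : (Real.pi : ℂ) * Complex.I / 4 = ((Real.pi / 4 : ℝ) : ℂ) * Complex.I := by
    push_cast; ring
  rw [h, Complex.exp_mul_I, ← Complex.ofReal_cos, ← Complex.ofReal_sin,
    Real.cos_pi_div_four, Real.sin_pi_div_four]
  push_cast; ring

lemma gsum_one : gsum 1 = (Real.sqrt (2^1) : ℝ) * Complex.exp (Real.pi * Complex.I / 4) := by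
  have h2 : Finset.Ioc 0 (2^1) = ({1, 2} : Finset ℕ) := by decide
  rw [gsum, h2]
  rw [Finset.sum_insert (by decide), Finset.sum_singleton]
  have h1 : gterm 1 1 = Complex.I := by
    have : (Real.pi : ℂ) * Complex.I * (1:ℂ)^2 / (2^1 : ℂ)
        = ((Real.pi/2 : ℝ) : ℂ) * Complex.I := by push_cast; ring
    rw [gterm]; push_cast
    rw [this, Complex.exp_mul_I, ← Complex.ofReal_cos, ← Complex.ofReal_sin,
      Real.cos_pi_div_two, Real.sin_pi_div_two]
    simp
  have h2' : gterm 1 2 = 1 := by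
    have : (Real.pi : ℂ) * Complex.I * ((2:ℕ):ℂ)^2 / (2^1 : ℂ)
        = 2 * Real.pi * Complex.I := by push_cast; ring
    rw [gterm, this, Complex.exp_two_pi_mul_I]
  rw [h1, h2', exp_pi_div_four]
  have : Real.sqrt (2^1) = Real.sqrt 2 := by rw [pow_one]
  rw [this]
  have hs : (Real.sqrt 2 : ℂ) * (Real.sqrt 2 : ℂ) = 2 := by
    rw [← Complex.ofReal_mul, Real.mul_self_sqrt (by norm_num : (0:ℝ) ≤ 2)]
    norm_num
  push_cast
  linear_combination (-(1+Complex.I)/2) * hs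

lemma gsum_two : gsum 2 = (Real.sqrt (2^2) : ℝ) * Complex.exp (Real.pi * Complex.I / 4) := by
  have h4 : Finset.Ioc 0 (2^2) = ({1, 2, 3, 4} : Finset ℕ) := by decide
  rw [gsum, h4]
  rw [Finset.sum_insert (by decide), Finset.sum_insert (by decide),
    Finset.sum_insert (by decide), Finset.sum_singleton]
  have t1 : gterm 2 1 = Complex.exp (Real.pi * Complex.I / 4) := by
    rw [gterm]; congr 1; push_cast; ring
  have t2 : gterm 2 2 = -1 := by
    have : (Real.pi : ℂ) * Complex.I * ((2:ℕ):ℂ)^2 / (2^2 : ℂ) = Real.pi * Complex.I := by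
      push_cast; ring
    rw [gterm, this, Complex.exp_pi_mul_I]
  have t3 : gterm 2 3 = Complex.exp (Real.pi * Complex.I / 4) := by
    have : (Real.pi : ℂ) * Complex.I * ((3:ℕ):ℂ)^2 / (2^2 : ℂ)
        = Real.pi * Complex.I / 4 + 2 * Real.pi * Complex.I := by push_cast; ring
    rw [gterm, this, Complex.exp_add, Complex.exp_two_pi_mul_I, mul_one]
  have t4 : gterm 2 4 = 1 := by
    have : (Real.pi : ℂ) * Complex.I * ((4:ℕ):ℂ)^2 / (2^2 : ℂ)
        = 2 * Real.pi * Complex.I + 2 * Real.pi * Complex.I := by push_cast; ring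
    rw [gterm, this, Complex.exp_add, Complex.exp_two_pi_mul_I, mul_one]
  rw [t1, t2, t3, t4]
  have : Real.sqrt (2^2) = 2 := by
    rw [Real.sqrt_sq (by norm_num : (0:ℝ) ≤ 2)]
  rw [this]
  push_cast
  ring

lemma gterm_double (r k : ℕ) : gterm (r+2) (2*k) = gterm r k := by
  rw [gterm, gterm]
  congr 1
  have h : (2:ℂ)^r ≠ 0 := pow_ne_zero _ two_ne_zero
  have h2 : (2:ℂ)^(r+2) = 2^r * 4 := by ring
  rw [h2]
  push_cast
  field_simp
  ring

lemma gterm_shift (r : ℕ) (hr : 1 ≤ r) (j : ℕ) :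
    gterm (r+2) (2^(r+1) + j) = (-1:ℂ)^j * gterm (r+2) j := by
  rw [gterm, gterm]
  have h : (2:ℂ)^(r+2) ≠ 0 := pow_ne_zero _ two_ne_zero
  have key : (Real.pi : ℂ) * Complex.I * ((2^(r+1) + j : ℕ) : ℂ)^2 / (2^(r+2) : ℂ)
      = ((j + 2^r : ℕ) : ℂ) * (Real.pi * Complex.I)
        + Real.pi * Complex.I * (j : ℂ)^2 / (2^(r+2) : ℂ) := by
    push_cast
    have e1 : (2:ℂ)^(r+1) = 2^r * 2 := by ring
    have e2 : (2:ℂ)^(r+2) = 2^r * 4 := by ring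
    rw [e1, e2]
    have h' : (2:ℂ)^r ≠ 0 := pow_ne_zero _ two_ne_zero
    field_simp
    ring
  rw [key, Complex.exp_add, Complex.exp_nat_mul, Complex.exp_pi_mul_I]
  congr 1
  rw [pow_add]
  have : ((-1:ℂ))^(2^r) = 1 := Even.neg_one_pow ⟨2^(r-1), by
    rw [← two_mul, ← pow_succ']
    congr 1
    omega⟩
  rw [this, mul_one]

lemma even_filter (n : ℕ) :
    (Finset.Ioc 0 (2*n)).filter (fun j => Even j) = (Finset.Ioc 0 n).image (fun k => 2*k) := by
  ext j
  simp only [Finset.mem_filter, Finset.mem_Ioc, Finset.mem_image]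
  constructor
  · rintro ⟨⟨h0, hle⟩, k, hk⟩
    exact ⟨k, ⟨by omega, by omega⟩, by omega⟩
  · rintro ⟨k, ⟨h0, hle⟩, hk⟩
    exact ⟨⟨by omega, by omega⟩, k, by omega⟩

lemma gsum_double (r : ℕ) (hr : 1 ≤ r) : gsum (r+2) = 2 * gsum r := by
  have hsplit : gsum (r+2)
      = (∑ j ∈ Finset.Ioc 0 (2^(r+1)), gterm (r+2) j)
        + ∑ j ∈ Finset.Ioc (2^(r+1)) (2^(r+2)), gterm (r+2) j := by
    rw [gsum, Finset.sum_Ioc_consecutive _ (Nat.zero_le _)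
      (Nat.pow_le_pow_right (by norm_num) (by omega))]
  have hre : ∑ j ∈ Finset.Ioc (2^(r+1)) (2^(r+2)), gterm (r+2) j
      = ∑ j ∈ Finset.Ioc 0 (2^(r+1)), gterm (r+2) (2^(r+1) + j) := by
    have : Finset.Ioc (2^(r+1)) (2^(r+2)) =
        (Finset.Ioc 0 (2^(r+1))).map (addLeftEmbedding (2^(r+1))) := by
      rw [Finset.map_add_left_Ioc, add_zero, ← two_mul, ← pow_succ']
    rw [this, Finset.sum_map]
    simp [addLeftEmbedding_apply]
  rw [hsplit, hre, ← Finset.sum_add_distrib]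
  have hterm : ∀ j ∈ Finset.Ioc 0 (2^(r+1)),
      gterm (r+2) j + gterm (r+2) (2^(r+1) + j) = (1 + (-1:ℂ)^j) * gterm (r+2) j := by
    intro j _
    rw [gterm_shift r hr j]
    ring
  rw [Finset.sum_congr rfl hterm]
  rw [← Finset.sum_filter_add_sum_filter_not (Finset.Ioc 0 (2^(r+1))) (fun j => Even j)]
  have hodd : ∑ j ∈ (Finset.Ioc 0 (2^(r+1))).filter (fun j => ¬ Even j),
      (1 + (-1:ℂ)^j) * gterm (r+2) j = 0 := by
    apply Finset.sum_eq_zero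
    intro j hj
    simp only [Finset.mem_filter] at hj
    rw [Odd.neg_one_pow (Nat.not_even_iff_odd.mp hj.2)]
    ring
  have heven : ∑ j ∈ (Finset.Ioc 0 (2^(r+1))).filter (fun j => Even j),
      (1 + (-1:ℂ)^j) * gterm (r+2) j = 2 * gsum r := by
    have h2n : (2:ℕ)^(r+1) = 2 * 2^r := by rw [pow_succ']
    rw [h2n, even_filter, Finset.sum_image (by intro a _ b _ h; have h' : 2 * a = 2 * b := h; omega)]
    rw [gsum, Finset.mul_sum]
    apply Finset.sum_congr rfl
    intro k _
    rw [pow_mul, neg_one_sq, one_pow, gterm_double]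
    ring
  rw [hodd, heven, add_zero]

lemma gsum_eq (r : ℕ) (hr : 1 ≤ r) :
    gsum r = (Real.sqrt (2^r) : ℝ) * Complex.exp (Real.pi * Complex.I / 4) := by
  induction r using Nat.strong_induction_on with
  | _ r ih =>
    match r, hr with
    | 1, _ => exact gsum_one
    | 2, _ => exact gsum_two
    | (s+3), _ =>
      have h1 : (1:ℕ) ≤ s + 1 := by omega
      have := gsum_double (s+1) h1
      have hrec := ih (s+1) (by omega) h1
      rw [show s + 3 = (s+1) + 2 by omega] at *
      rw [this, hrec]
      have hsq : Real.sqrt (2 ^ (s + 1 + 2)) = 2 * Real.sqrt (2 ^ (s+1)) := by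
        have : (2:ℝ) ^ (s + 1 + 2) = 2^2 * 2^(s+1) := by ring
        rw [this, Real.sqrt_mul (by positivity), Real.sqrt_sq (by norm_num : (0:ℝ) ≤ 2)]
      rw [hsq]
      push_cast
      ring

/-- For `r ≥ 1`, `(1/2^{r/2}) Σ_{j=1}^{2^r} e^{2πi j²/2^{r+1}} = e^{πi/4}`. -/
theorem stmt_9 (r : ℕ) (hr : 1 ≤ r) :
    (∑ j ∈ Finset.Icc 1 (2 ^ r : ℕ),
        Complex.exp (2 * Real.pi * Complex.I * (j : ℂ) ^ 2 / (2 ^ (r + 1) : ℂ))) /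
      (Real.sqrt ((2 : ℝ) ^ r) : ℂ) = Complex.exp (Real.pi * Complex.I / 4) := by
  have hIcc : Finset.Icc 1 (2^r) = Finset.Ioc 0 (2^r) := by
    ext j; simp [Nat.lt_iff_add_one_le]
  have hterm : ∀ j : ℕ,
      Complex.exp (2 * Real.pi * Complex.I * (j : ℂ) ^ 2 / (2 ^ (r + 1) : ℂ)) = gterm r j := by
    intro j
    rw [gterm]
    congr 1
    have h : (2:ℂ)^r ≠ 0 := pow_ne_zero _ two_ne_zero
    have e : (2:ℂ)^(r+1) = 2 * 2^r := by ring
    rw [e]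
    field_simp
  have hsum : (∑ j ∈ Finset.Icc 1 (2 ^ r : ℕ),
      Complex.exp (2 * Real.pi * Complex.I * (j : ℂ) ^ 2 / (2 ^ (r + 1) : ℂ))) = gsum r := by
    rw [hIcc, gsum]
    exact Finset.sum_congr rfl fun j _ => hterm j
  rw [hsum, gsum_eq r hr]
  have hne : ((Real.sqrt ((2:ℝ)^r) : ℝ) : ℂ) ≠ 0 := by
    norm_cast
    positivity
  field_simp
end

section
/- Let A = Z/2^r × Z/2^r with quadratic form q(m,n) = mn/2^r. Every isometry of (A,q) is given by a matrix of the form diag(a, a^{-1}) or antidiag(b, b^{-1}) for odd units a, b mod 2^r, and the isometry group has order 2^r for r ≥ 1; for r ≥ 3 it is isomorphic to (Z/2 × Z/2^{r-2}) ⋊ Z/2. -/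
/-- The multiplicative group structure that `AddAut A` carried in the older Mathlib
(composition as multiplication); current Mathlib makes `AddAut A` an additive group. -/
instance addAutMulGroupOld (A : Type*) [Add A] : Group (AddAut A) where
  mul g h := AddEquiv.trans h g
  one := AddEquiv.refl _
  inv := AddEquiv.symm
  mul_assoc _ _ _ := rfl
  one_mul _ := rfl
  mul_one _ := rfl
  inv_mul_cancel := AddEquiv.self_trans_symm

/-- The group of isometries of `(ℤ/2^r × ℤ/2^r, q)` with `q(m,n) = mn/2^r`,
as a subgroup of the automorphism group: those `γ` with
`(γ x).1 (γ x).2 ≡ x.1 x.2 (mod 2^r)` for all `x`. -/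
def isomE (r : ℕ) : Subgroup (AddAut (ZMod (2 ^ r) × ZMod (2 ^ r))) where
  carrier := {γ | ∀ x, (γ x).1 * (γ x).2 = x.1 * x.2}
  one_mem' := fun _ => rfl
  mul_mem' := by
    intro γ δ hγ hδ x
    exact (hγ (δ x)).trans (hδ x)
  inv_mem' := by
    intro γ hγ x
    have h := hγ (γ.symm x)
    rw [AddEquiv.apply_symm_apply] at h
    exact h.symm

def homZModn {M : Type*} [Monoid M] (n : ℕ) [NeZero n] (m : M) (hm : m ^ n = 1) :
    Multiplicative (ZMod n) →* M where
  toFun g := m ^ (Multiplicative.toAdd g).val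
  map_one' := by simp
  map_mul' a b := by
    show m ^ (Multiplicative.toAdd a + Multiplicative.toAdd b).val = _
    rw [ZMod.val_add, ← pow_eq_pow_mod _ hm, pow_add]

lemma homZModn_apply {M : Type*} [Monoid M] (n : ℕ) [NeZero n] (m : M) (hm : m ^ n = 1)
    (g : Multiplicative (ZMod n)) : homZModn n m hm g = m ^ (Multiplicative.toAdd g).val := rfl

-- linearity
lemma lin {N : ℕ} [NeZero N] (f : AddAut (ZMod N × ZMod N)) (x : ZMod N × ZMod N) :
    f x = (x.1 * (f (1,0)).1 + x.2 * (f (0,1)).1, x.1 * (f (1,0)).2 + x.2 * (f (0,1)).2) := by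
  have h1 : ∀ c : ZMod N, f (c, 0) = (c * (f (1,0)).1, c * (f (1,0)).2) := by
    intro c
    have hc : ((c, (0 : ZMod N)) : ZMod N × ZMod N) = c.val • ((1 : ZMod N), (0 : ZMod N)) := by
      ext <;> simp [nsmul_eq_mul, ZMod.natCast_zmod_val]
    rw [hc, map_nsmul]
    ext <;> simp [nsmul_eq_mul, ZMod.natCast_zmod_val]
  have h2 : ∀ c : ZMod N, f (0, c) = (c * (f (0,1)).1, c * (f (0,1)).2) := by
    intro c
    have hc : (((0 : ZMod N), c) : ZMod N × ZMod N) = c.val • ((0 : ZMod N), (1 : ZMod N)) := by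
      ext <;> simp [nsmul_eq_mul, ZMod.natCast_zmod_val]
    rw [hc, map_nsmul]
    ext <;> simp [nsmul_eq_mul, ZMod.natCast_zmod_val]
  have hx : x = (x.1, (0:ZMod N)) + ((0:ZMod N), x.2) := by ext <;> simp
  rw [hx, map_add, h1, h2]
  ext <;> simp

-- unit iff odd detection via ZMod 2
lemma unit_of_cast_one {r : ℕ} (hr : 1 ≤ r) (x : ZMod (2 ^ r))
    (h : ZMod.castHom (dvd_pow_self 2 (by omega : r ≠ 0)) (ZMod 2) x = 1) : IsUnit x := by
  haveI : NeZero (2 ^ r) := ⟨pow_ne_zero _ two_ne_zero⟩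
  have hx : ((x.val : ℕ) : ZMod (2 ^ r)) = x := ZMod.natCast_zmod_val x
  rw [← hx, ZMod.isUnit_iff_coprime]
  have hcast : (ZMod.castHom (dvd_pow_self 2 (by omega : r ≠ 0)) (ZMod 2)) x
      = ((x.val : ℕ) : ZMod 2) := by
    conv_lhs => rw [← hx]
    simp
  rw [hcast] at h
  have hodd : ¬ (2 ∣ x.val) := by
    intro hd
    rw [(ZMod.natCast_eq_zero_iff x.val 2).2 hd] at h
    exact one_ne_zero h.symm
  rw [Nat.two_dvd_ne_zero] at hodd
  exact Nat.Coprime.pow_right _ (Nat.coprime_two_right.mpr (Nat.odd_iff.mpr (by omega : x.val % 2 = 1)))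

lemma classify {r : ℕ} (hr : 1 ≤ r) (γ : AddAut (ZMod (2 ^ r) × ZMod (2 ^ r)))
    (hγ : γ ∈ isomE r) :
    (∃ a : (ZMod (2 ^ r))ˣ, ∀ x : ZMod (2 ^ r) × ZMod (2 ^ r),
        γ x = ((a : ZMod (2 ^ r)) * x.1, ((a⁻¹ : (ZMod (2 ^ r))ˣ) : ZMod (2 ^ r)) * x.2)) ∨
    (∃ b : (ZMod (2 ^ r))ˣ, ∀ x : ZMod (2 ^ r) × ZMod (2 ^ r),
        γ x = ((b : ZMod (2 ^ r)) * x.2, ((b⁻¹ : (ZMod (2 ^ r))ˣ) : ZMod (2 ^ r)) * x.1)) := by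
  haveI : NeZero (2 ^ r) := ⟨pow_ne_zero _ two_ne_zero⟩
  set p := (γ (1,0)).1 with hp
  set q := (γ (1,0)).2 with hq
  set s := (γ (0,1)).1 with hs
  set t := (γ (0,1)).2 with ht
  have e10 : p * q = 0 := by have := hγ (1,0); simpa using this
  have e01 : s * t = 0 := by have := hγ (0,1); simpa using this
  have e11 : p * t + s * q = 1 := by
    have h := hγ (1,1)
    rw [lin γ (1,1)] at h
    simp only [one_mul] at h
    have : (p + s) * (q + t) = 1 := by simpa using h
    ring_nf at this ⊢
    linear_combination this - e10 - e01
  -- exactly one of p*t, s*q is a unit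
  set c2 := ZMod.castHom (dvd_pow_self 2 (by omega : r ≠ 0)) (ZMod 2) with hc2
  have hsum : c2 (p * t) + c2 (s * q) = 1 := by
    rw [← map_add, e11, map_one]
  have hcases : c2 (p * t) = 1 ∨ c2 (s * q) = 1 := by
    revert hsum; generalize c2 (p*t) = A; generalize c2 (s*q) = B; revert A B; decide
  rcases hcases with h | h
  · -- diagonal case
    left
    have hu : IsUnit (p * t) := unit_of_cast_one hr _ h
    have hup : IsUnit p := isUnit_of_mul_isUnit_left hu
    have hut : IsUnit t := isUnit_of_mul_isUnit_left (by rwa [mul_comm] at hu)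
    obtain ⟨a, ha⟩ := hup
    obtain ⟨t', ht'⟩ := hut
    have hq0 : q = 0 := by
      have := congrArg (fun z => ((a⁻¹ : (ZMod (2^r))ˣ) : ZMod (2^r)) * z) e10
      simpa [← ha, ← mul_assoc] using this
    have hs0 : s = 0 := by
      have := congrArg (fun z => z * ((t'⁻¹ : (ZMod (2^r))ˣ) : ZMod (2^r))) e01
      simpa [← ht', mul_assoc] using this
    have hpt : p * t = 1 := by rw [← e11, hq0, hs0]; ring
    have hainv : ((a⁻¹ : (ZMod (2^r))ˣ) : ZMod (2^r)) = t := by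
      calc ((a⁻¹ : (ZMod (2^r))ˣ) : ZMod (2^r))
          = ((a⁻¹ : (ZMod (2^r))ˣ) : ZMod (2^r)) * (p * t) := by rw [hpt, mul_one]
        _ = t := by rw [← ha, ← mul_assoc]; simp
    refine ⟨a, fun x => ?_⟩
    rw [lin γ x, ← hp, ← hq, ← hs, ← ht, hq0, hs0, ha, hainv]
    simp [mul_comm]
  · -- antidiagonal case
    right
    have hu : IsUnit (s * q) := unit_of_cast_one hr _ h
    have hus : IsUnit s := isUnit_of_mul_isUnit_left hu
    have huq : IsUnit q := isUnit_of_mul_isUnit_left (by rwa [mul_comm] at hu)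
    obtain ⟨b, hb⟩ := hus
    obtain ⟨q', hq'⟩ := huq
    have hp0 : p = 0 := by
      have := congrArg (fun z => z * ((q'⁻¹ : (ZMod (2^r))ˣ) : ZMod (2^r))) e10
      simpa [← hq', mul_assoc] using this
    have ht0 : t = 0 := by
      have := congrArg (fun z => ((b⁻¹ : (ZMod (2^r))ˣ) : ZMod (2^r)) * z) e01
      simpa [← hb, ← mul_assoc] using this
    have hsq : s * q = 1 := by rw [← e11, hp0, ht0]; ring
    have hbinv : ((b⁻¹ : (ZMod (2^r))ˣ) : ZMod (2^r)) = q := by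
      calc ((b⁻¹ : (ZMod (2^r))ˣ) : ZMod (2^r))
          = ((b⁻¹ : (ZMod (2^r))ˣ) : ZMod (2^r)) * (s * q) := by rw [hsq, mul_one]
        _ = q := by rw [← hb, ← mul_assoc]; simp
    refine ⟨b, fun x => ?_⟩
    rw [lin γ x, ← hp, ← hq, ← hs, ← ht, hp0, ht0, hb, hbinv]
    simp [mul_comm]

def invAut (G : Type*) [CommGroup G] : MulAut G where
  toFun := (·⁻¹)
  invFun := (·⁻¹)
  left_inv := inv_inv
  right_inv := inv_inv
  map_mul' := mul_inv

lemma invAut_sq (G : Type*) [CommGroup G] : (invAut G) ^ 2 = 1 := by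
  ext x
  show invAut G (invAut G x) = x
  simp [invAut]

-- the diagonal automorphism
def dAut {r : ℕ} (u : (ZMod (2 ^ r))ˣ) : AddAut (ZMod (2 ^ r) × ZMod (2 ^ r)) where
  toFun x := ((u : ZMod (2^r)) * x.1, ((u⁻¹ : (ZMod (2^r))ˣ) : ZMod (2^r)) * x.2)
  invFun x := (((u⁻¹ : (ZMod (2^r))ˣ) : ZMod (2^r)) * x.1, (u : ZMod (2^r)) * x.2)
  left_inv x := by ext <;> simp [← mul_assoc]
  right_inv x := by ext <;> simp [← mul_assoc]
  map_add' x y := by ext <;> simp [mul_add]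

lemma dAut_apply {r : ℕ} (u : (ZMod (2 ^ r))ˣ) (x) :
    dAut u x = ((u : ZMod (2^r)) * x.1, ((u⁻¹ : (ZMod (2^r))ˣ) : ZMod (2^r)) * x.2) := rfl

def dHom (r : ℕ) : (ZMod (2 ^ r))ˣ →* isomE r where
  toFun u := ⟨dAut u, by
    intro x
    show ((u : ZMod (2^r)) * x.1) * (((u⁻¹ : (ZMod (2^r))ˣ) : ZMod (2^r)) * x.2) = x.1 * x.2
    rw [mul_mul_mul_comm, ← Units.val_mul, mul_inv_cancel, Units.val_one, one_mul]⟩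
  map_one' := by
    apply Subtype.ext
    apply AddEquiv.ext
    intro x
    show dAut 1 x = x
    simp [dAut_apply]
  map_mul' u v := by
    apply Subtype.ext
    apply AddEquiv.ext
    intro x
    show dAut (u * v) x = dAut u (dAut v x)
    simp [dAut_apply, mul_assoc, mul_left_comm]

def swapE (r : ℕ) : isomE r :=
  ⟨AddEquiv.prodComm, fun x => mul_comm _ _⟩

lemma swapE_sq (r : ℕ) : (swapE r) ^ 2 = 1 := by
  apply Subtype.ext
  apply AddEquiv.ext
  intro x
  have : ((((swapE r) ^ 2 : isomE r) : AddAut _) : _ → _) x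
      = ((swapE r : AddAut _)) (((swapE r : isomE r) : AddAut _) x) := by
    rw [sq]
    rfl
  rw [this]
  rfl

lemma swapE_inv (r : ℕ) : (swapE r)⁻¹ = swapE r :=
  inv_eq_of_mul_eq_one_left (by rw [← sq, swapE_sq])

lemma conj_swap (r : ℕ) (u : (ZMod (2 ^ r))ˣ) :
    swapE r * dHom r u * (swapE r)⁻¹ = dHom r u⁻¹ := by
  rw [swapE_inv]
  apply Subtype.ext
  apply AddEquiv.ext
  intro x
  show (AddEquiv.prodComm : _ ≃+ _) (dAut u ((AddEquiv.prodComm : _ ≃+ _) x)) = dAut u⁻¹ x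
  simp [dAut_apply]

def φU (r : ℕ) : Multiplicative (ZMod 2) →* MulAut (ZMod (2 ^ r))ˣ :=
  homZModn 2 (invAut _) (invAut_sq _)

def sHom (r : ℕ) : Multiplicative (ZMod 2) →* isomE r :=
  homZModn 2 (swapE r) (swapE_sq r)

lemma compat (r : ℕ) : ∀ g, (dHom r).comp ((φU r) g).toMonoidHom
    = (MulAut.conj ((sHom r) g)).toMonoidHom.comp (dHom r) := by
  intro g
  apply MonoidHom.ext
  intro u
  simp only [MonoidHom.comp_apply, MulEquiv.coe_toMonoidHom, MulAut.conj_apply]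
  have hv : (Multiplicative.toAdd g).val = 0 ∨ (Multiplicative.toAdd g).val = 1 := by
    have := ZMod.val_lt (Multiplicative.toAdd g)
    omega
  rcases hv with hv | hv
  · rw [φU, sHom, homZModn_apply, homZModn_apply, hv, pow_zero, pow_zero]
    simp
  · rw [φU, sHom, homZModn_apply, homZModn_apply, hv, pow_one, pow_one]
    have h1 : (invAut (ZMod (2 ^ r))ˣ) u = u⁻¹ := rfl
    rw [h1, ← conj_swap r u]

def Φ (r : ℕ) : ((ZMod (2 ^ r))ˣ ⋊[φU r] Multiplicative (ZMod 2)) →* isomE r :=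
  SemidirectProduct.lift (dHom r) (sHom r) (compat r)

lemma Φ_apply (r : ℕ) (x : (ZMod (2 ^ r))ˣ ⋊[φU r] Multiplicative (ZMod 2)) :
    Φ r x = dHom r x.left * sHom r x.right := rfl


lemma Φ_bij (r : ℕ) (hr : 1 ≤ r) : Function.Bijective (Φ r) := by
  haveI : NeZero (2 ^ r) := ⟨pow_ne_zero _ two_ne_zero⟩
  haveI : Fact (1 < 2 ^ r) := ⟨Nat.one_lt_two_pow_iff.mpr (by omega)⟩
  constructor
  · rw [injective_iff_map_eq_one]
    rintro ⟨u, g⟩ h1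
    have hv : (Multiplicative.toAdd g).val = 0 ∨ (Multiplicative.toAdd g).val = 1 := by
      have := ZMod.val_lt (Multiplicative.toAdd g)
      omega
    rcases hv with hv | hv
    · have hg : g = 1 := by
        have h0 : Multiplicative.toAdd g = 0 := by rwa [ZMod.val_eq_zero] at hv
        have := congrArg Multiplicative.ofAdd h0
        simpa using this
      rw [Φ_apply] at h1
      have hsr : ((⟨u, g⟩ : _ ⋊[φU r] _)).right = g := rfl
      have hsl : ((⟨u, g⟩ : _ ⋊[φU r] _)).left = u := rfl
      rw [hsr, hsl, hg, map_one, mul_one] at h1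
      have h2 := congrArg (fun z : isomE r =>
        (z : AddAut _) ((1 : ZMod (2^r)), (0 : ZMod (2^r)))) h1
      have h3 : ((dHom r u : isomE r) : AddAut _) ((1 : ZMod (2^r)), (0 : ZMod (2^r)))
          = ((u : ZMod (2^r)) * 1, ((u⁻¹ : (ZMod (2^r))ˣ) : ZMod (2^r)) * 0) := rfl
      simp only [h3] at h2
      have hu : u = 1 := by
        apply Units.ext
        rw [show ((1 : isomE r) : AddAut _) ((1 : ZMod (2^r)), (0 : ZMod (2^r))) = (1, 0) from rfl] at h2
        have := congrArg Prod.fst h2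
        simpa using this
      rw [hu, hg]
      rfl
    · exfalso
      have hg1 : sHom r g = swapE r := by
        rw [sHom, homZModn_apply, hv, pow_one]
      rw [Φ_apply] at h1
      have hsr : ((⟨u, g⟩ : _ ⋊[φU r] _)).right = g := rfl
      have hsl : ((⟨u, g⟩ : _ ⋊[φU r] _)).left = u := rfl
      rw [hsr, hsl, hg1] at h1
      have h2 : ((dHom r u * swapE r : isomE r) : AddAut _) ((1 : ZMod (2^r)), (0 : ZMod (2^r)))
          = ((1 : isomE r) : AddAut _) ((1 : ZMod (2^r)), (0 : ZMod (2^r))) := by rw [h1]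
      have h3 : ((dHom r u * swapE r : isomE r) : AddAut _) ((1 : ZMod (2^r)), (0 : ZMod (2^r)))
          = ((u : ZMod (2^r)) * 0, ((u⁻¹ : (ZMod (2^r))ˣ) : ZMod (2^r)) * 1) := rfl
      have h4 : ((1 : isomE r) : AddAut _) ((1 : ZMod (2^r)), (0 : ZMod (2^r)))
          = (1, 0) := rfl
      rw [h3, h4] at h2
      have h5 := congrArg Prod.fst h2
      simp only [mul_zero] at h5
      exact zero_ne_one h5
  · rintro ⟨γ, hγ⟩
    rcases classify hr γ hγ with ⟨a, ha⟩ | ⟨b, hb⟩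
    · refine ⟨⟨a, 1⟩, ?_⟩
      rw [Φ_apply]
      have hsr : ((⟨a, 1⟩ : _ ⋊[φU r] _)).right = 1 := rfl
      have hsl : ((⟨a, 1⟩ : _ ⋊[φU r] _)).left = a := rfl
      rw [hsr, hsl, map_one, mul_one]
      apply Subtype.ext
      apply AddEquiv.ext
      intro x
      show dAut a x = γ x
      rw [ha x, dAut_apply]
    · refine ⟨⟨b, Multiplicative.ofAdd 1⟩, ?_⟩
      rw [Φ_apply]
      have hsr : ((⟨b, Multiplicative.ofAdd 1⟩ : _ ⋊[φU r] _)).right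
          = Multiplicative.ofAdd 1 := rfl
      have hsl : ((⟨b, Multiplicative.ofAdd 1⟩ : _ ⋊[φU r] _)).left = b := rfl
      have hg1 : sHom r (Multiplicative.ofAdd 1) = swapE r := by
        rw [sHom, homZModn_apply]
        have hval : (Multiplicative.toAdd (Multiplicative.ofAdd (1 : ZMod 2))).val = 1 := rfl
        rw [hval, pow_one]
      rw [hsr, hsl, hg1]
      apply Subtype.ext
      apply AddEquiv.ext
      intro x
      show dAut b ((AddEquiv.prodComm : _ ≃+ _) x) = γ x
      rw [hb x, dAut_apply]
      rfl

def sdEquivProd {N G : Type*} [Group N] [Group G] (φ : G →* MulAut N) :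
    (N ⋊[φ] G) ≃ N × G where
  toFun x := (x.left, x.right)
  invFun p := ⟨p.1, p.2⟩
  left_inv x := rfl
  right_inv p := rfl

lemma card_isomE (r : ℕ) (hr : 1 ≤ r) : Nat.card (isomE r) = 2 ^ r := by
  haveI : NeZero (2 ^ r) := ⟨pow_ne_zero _ two_ne_zero⟩
  have h1 : Nat.card ((ZMod (2^r))ˣ ⋊[φU r] Multiplicative (ZMod 2)) = Nat.card (isomE r) :=
    Nat.card_congr (Equiv.ofBijective _ (Φ_bij r hr))
  rw [← h1, Nat.card_congr (sdEquivProd (φU r)), Nat.card_prod]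
  have hU : Nat.card (ZMod (2^r))ˣ = 2 ^ (r - 1) := by
    rw [Nat.card_eq_fintype_card, ZMod.card_units_eq_totient,
      Nat.totient_prime_pow Nat.prime_two (by omega : 0 < r)]
    omega
  have h2 : Nat.card (Multiplicative (ZMod 2)) = 2 := by
    rw [Nat.card_eq_fintype_card]
    simp
  rw [hU, h2]
  rw [← pow_succ]
  congr 1
  omega

lemma five_pow_int (k : ℕ) : ∃ m : ℤ, 5 ^ 2 ^ k = 1 + 2 ^ (k + 2) + 2 ^ (k + 3) * m := by
  induction k with
  | zero => exact ⟨0, by norm_num⟩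
  | succ k ih =>
    obtain ⟨m, hm⟩ := ih
    refine ⟨m + 2 ^ k * (1 + 2 * m) ^ 2, ?_⟩
    rw [show 2 ^ (k + 1) = 2 ^ k * 2 from by ring, pow_mul, hm]
    have e2 : (2 : ℤ) ^ (k + 2) = 4 * 2 ^ k := by rw [pow_add]; ring
    have e3 : (2 : ℤ) ^ (k + 3) = 8 * 2 ^ k := by rw [pow_add]; ring
    have e5 : (2 : ℤ) ^ (k + 1 + 3) = 16 * 2 ^ k := by rw [pow_add]; ring
    rw [e2, e3, e5]
    ring

lemma five_pow_zmod {r : ℕ} (hr : 3 ≤ r) :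
    ((5 : ZMod (2 ^ r)) ^ 2 ^ (r - 2) = 1) ∧
    ((5 : ZMod (2 ^ r)) ^ 2 ^ (r - 3) = 1 + 2 ^ (r - 1)) := by
  haveI : NeZero (2 ^ r) := ⟨pow_ne_zero _ two_ne_zero⟩
  have hzero : ((2 : ZMod (2 ^ r))) ^ r = 0 := by
    have : (((2 : ℕ) ^ r : ℕ) : ZMod (2 ^ r)) = 0 := by
      rw [ZMod.natCast_eq_zero_iff]
    push_cast at this
    exact this
  constructor
  · obtain ⟨m, hm⟩ := five_pow_int (r - 2)
    have h := congrArg (fun z : ℤ => (z : ZMod (2 ^ r))) hm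
    push_cast at h
    rw [show r - 2 + 2 = r by omega, show r - 2 + 3 = r + 1 by omega] at h
    rw [h, hzero, pow_succ, hzero]
    ring
  · obtain ⟨m, hm⟩ := five_pow_int (r - 3)
    have h := congrArg (fun z : ℤ => (z : ZMod (2 ^ r))) hm
    push_cast at h
    rw [show r - 3 + 2 = r - 1 by omega, show r - 3 + 3 = r by omega] at h
    rw [h, hzero]
    ring

lemma coprime_five (r : ℕ) : Nat.Coprime 5 (2 ^ r) :=
  Nat.Coprime.pow_right _ (by norm_num)

-- the unit 5
def u5 (r : ℕ) : (ZMod (2 ^ r))ˣ := ZMod.unitOfCoprime 5 (coprime_five r)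

lemma u5_val (r : ℕ) : ((u5 r : (ZMod (2 ^ r))ˣ) : ZMod (2 ^ r)) = 5 := by
  rw [u5, ZMod.coe_unitOfCoprime]
  norm_num

lemma u5_pow_eq_one {r : ℕ} (hr : 3 ≤ r) : (u5 r) ^ 2 ^ (r - 2) = 1 := by
  apply Units.ext
  rw [Units.val_pow_eq_pow_val, u5_val, (five_pow_zmod hr).1, Units.val_one]

lemma orderOf_u5 {r : ℕ} (hr : 3 ≤ r) : orderOf (u5 r) = 2 ^ (r - 2) := by
  haveI : NeZero (2 ^ r) := ⟨pow_ne_zero _ two_ne_zero⟩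
  have hne : (u5 r) ^ 2 ^ (r - 3) ≠ 1 := by
    intro h
    have := congrArg (fun z : (ZMod (2 ^ r))ˣ => (z : ZMod (2 ^ r))) h
    simp only [Units.val_pow_eq_pow_val, u5_val, Units.val_one] at this
    rw [(five_pow_zmod hr).2] at this
    have h0 : ((2 : ZMod (2 ^ r))) ^ (r - 1) = 0 := by
      have := congrArg (fun z => z - (1 : ZMod (2 ^ r))) this
      simpa using this
    have : (((2 : ℕ) ^ (r - 1) : ℕ) : ZMod (2 ^ r)) = 0 := by push_cast; exact h0
    rw [ZMod.natCast_eq_zero_iff] at this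
    have := (Nat.pow_dvd_pow_iff_le_right (by omega : 1 < 2)).1 this
    omega
  have h2 : (u5 r) ^ (2 : ℕ) ^ (r - 3 + 1) = 1 := by
    rw [show r - 3 + 1 = r - 2 by omega]
    exact u5_pow_eq_one hr
  have := orderOf_eq_prime_pow (p := 2) (n := r - 3) (x := u5 r) hne h2
  rwa [show r - 3 + 1 = r - 2 by omega] at this

lemma u5_pow_ne_neg_one {r : ℕ} (hr : 3 ≤ r) (j : ℕ) : (u5 r) ^ j ≠ -1 := by
  intro h
  have hd : (2 : ℕ) ^ 3 ∣ 2 ^ r := pow_dvd_pow 2 hr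
  have h8 := congrArg (fun z : (ZMod (2 ^ r))ˣ =>
    ZMod.castHom hd (ZMod 8) ((z : (ZMod (2 ^ r))ˣ) : ZMod (2 ^ r))) h
  simp only [Units.val_pow_eq_pow_val, u5_val, map_pow] at h8
  have h5 : ZMod.castHom hd (ZMod 8) (5 : ZMod (2 ^ r)) = 5 := by
    have : (5 : ZMod (2 ^ r)) = ((5 : ℕ) : ZMod (2 ^ r)) := by norm_num
    rw [this, map_natCast]
    norm_num
  have hneg : ZMod.castHom hd (ZMod 8) ((-1 : (ZMod (2 ^ r))ˣ) : ZMod (2 ^ r)) = 7 := by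
    simp only [Units.val_neg, Units.val_one, map_neg, map_one]
    decide
  rw [h5, hneg] at h8
  have hsq : (5 : ZMod 8) ^ 2 = 1 := by decide
  rw [pow_eq_pow_mod j hsq] at h8
  have : j % 2 = 0 ∨ j % 2 = 1 := by omega
  rcases this with h' | h' <;> rw [h'] at h8 <;> revert h8 <;> decide

lemma neg_one_sq_units (r : ℕ) : (-1 : (ZMod (2 ^ r))ˣ) ^ 2 = 1 := by
  rw [neg_one_sq]

section units_struct
variable {r : ℕ} (hr : 3 ≤ r)

def ψ (r : ℕ) (hr : 3 ≤ r) :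
    (Multiplicative (ZMod 2) × Multiplicative (ZMod (2 ^ (r - 2)))) →* (ZMod (2 ^ r))ˣ :=
  haveI : NeZero (2 ^ (r - 2)) := ⟨pow_ne_zero _ two_ne_zero⟩
  (homZModn 2 (-1 : (ZMod (2 ^ r))ˣ) (neg_one_sq_units r)).coprod
    (homZModn (2 ^ (r - 2)) (u5 r) (u5_pow_eq_one hr))

lemma ψ_bij (r : ℕ) (hr : 3 ≤ r) : Function.Bijective (ψ r hr) := by
  haveI : NeZero (2 ^ r) := ⟨pow_ne_zero _ two_ne_zero⟩
  haveI : NeZero (2 ^ (r - 2)) := ⟨pow_ne_zero _ two_ne_zero⟩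
  have hinj : Function.Injective (ψ r hr) := by
    rw [injective_iff_map_eq_one]
    rintro ⟨a, b⟩ hab
    have h1 : ((-1 : (ZMod (2 ^ r))ˣ) ^ (Multiplicative.toAdd a).val)
        * (u5 r) ^ (Multiplicative.toAdd b).val = 1 := hab
    have hva : (Multiplicative.toAdd a).val = 0 ∨ (Multiplicative.toAdd a).val = 1 := by
      have := ZMod.val_lt (Multiplicative.toAdd a)
      omega
    have hb1 : (Multiplicative.toAdd b).val = 0 := by
      rcases hva with h' | h'
      · rw [h', pow_zero, one_mul] at h1
        have := orderOf_dvd_of_pow_eq_one h1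
        rw [orderOf_u5 hr] at this
        have hlt := ZMod.val_lt (Multiplicative.toAdd b)
        exact Nat.eq_zero_of_dvd_of_lt this hlt
      · rw [h', pow_one] at h1
        exfalso
        apply u5_pow_ne_neg_one hr (Multiplicative.toAdd b).val
        have := congrArg (fun z => (-1 : (ZMod (2 ^ r))ˣ) * z) h1
        simpa [← mul_assoc] using this
    have ha1 : (Multiplicative.toAdd a).val = 0 := by
      rcases hva with h' | h'
      · exact h'
      · exfalso
        rw [hb1, pow_zero, mul_one, h', pow_one] at h1
        apply u5_pow_ne_neg_one hr 0
        rw [pow_zero]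
        exact h1.symm
    have ha : a = 1 := by
      have h0 : Multiplicative.toAdd a = 0 := by rwa [ZMod.val_eq_zero] at ha1
      simpa using congrArg Multiplicative.ofAdd h0
    have hb : b = 1 := by
      have h0 : Multiplicative.toAdd b = 0 := by rwa [ZMod.val_eq_zero] at hb1
      simpa using congrArg Multiplicative.ofAdd h0
    rw [ha, hb]
    rfl
  refine ⟨hinj, ?_⟩
  have hcard : Fintype.card (Multiplicative (ZMod 2) × Multiplicative (ZMod (2 ^ (r - 2))))
      = Fintype.card (ZMod (2 ^ r))ˣ := by
    rw [Fintype.card_prod, ZMod.card_units_eq_totient,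
      Nat.totient_prime_pow Nat.prime_two (by omega : 0 < r)]
    have c1 : Fintype.card (Multiplicative (ZMod 2)) = 2 := by simp
    have c2 : Fintype.card (Multiplicative (ZMod (2 ^ (r - 2)))) = 2 ^ (r - 2) := by simp
    rw [c1, c2, ← pow_succ', show r - 2 + 1 = r - 1 by omega]
    norm_num
  exact (Fintype.bijective_iff_injective_and_card _).2 ⟨hinj, hcard⟩ |>.2

end units_struct

lemma invAut_pow_comm {G H : Type*} [CommGroup G] [CommGroup H] (e : G ≃* H) (v : ℕ) (g : G) :
    e ((invAut G ^ v) g) = (invAut H ^ v) (e g) := by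
  induction v generalizing g with
  | zero => simp
  | succ v ih =>
    have hG : (invAut G ^ (v + 1)) g = (invAut G ^ v) (g⁻¹) := by
      rw [pow_succ, MulAut.mul_apply]
      rfl
    have hH : (invAut H ^ (v + 1)) (e g) = (invAut H ^ v) ((e g)⁻¹) := by
      rw [pow_succ, MulAut.mul_apply]
      rfl
    rw [hG, hH, ← map_inv, ih]

def φP (r : ℕ) : Multiplicative (ZMod 2) →*
    MulAut (Multiplicative (ZMod 2) × Multiplicative (ZMod (2 ^ (r - 2)))) :=
  homZModn 2 (invAut _) (invAut_sq _)

noncomputable def sdCongr (r : ℕ) (hr : 3 ≤ r) :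
    ((ZMod (2 ^ r))ˣ ⋊[φU r] Multiplicative (ZMod 2)) ≃*
      ((Multiplicative (ZMod 2) × Multiplicative (ZMod (2 ^ (r - 2)))) ⋊[φP r]
        Multiplicative (ZMod 2)) :=
  letI eU := MulEquiv.ofBijective (ψ r hr) (ψ_bij r hr)
  { toFun := fun x => ⟨eU.symm x.left, x.right⟩
    invFun := fun x => ⟨eU x.left, x.right⟩
    left_inv := fun x => by ext <;> simp
    right_inv := fun x => by ext <;> simp
    map_mul' := fun x y => by
      have hleft : eU.symm ((x * y).left)
          = eU.symm x.left * (φP r) x.right (eU.symm y.left) := by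
        rw [SemidirectProduct.mul_left, map_mul]
        congr 1
        show eU.symm ((invAut (ZMod (2 ^ r))ˣ ^ (Multiplicative.toAdd x.right).val) y.left)
          = (invAut _ ^ (Multiplicative.toAdd x.right).val) (eU.symm y.left)
        exact invAut_pow_comm eU.symm _ _
      show (⟨eU.symm (x * y).left, (x * y).right⟩ : _ ⋊[φP r] _)
          = ⟨eU.symm x.left * (φP r) x.right (eU.symm y.left), x.right * y.right⟩
      rw [hleft]
      rfl }


/-- Every isometry of `(ℤ/2^r × ℤ/2^r, q(m,n) = mn/2^r)` is of the form
`diag(a, a⁻¹)` or `antidiag(b, b⁻¹)` for units `a, b mod 2^r`; the isometry group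
has order `2^r` for `r ≥ 1`, and for `r ≥ 3` it is isomorphic to
`(ℤ/2 × ℤ/2^{r-2}) ⋊ ℤ/2`. -/
theorem stmt_13 (r : ℕ) (hr : 1 ≤ r) :
    (∀ γ ∈ isomE r,
      (∃ a : (ZMod (2 ^ r))ˣ, ∀ x : ZMod (2 ^ r) × ZMod (2 ^ r),
          γ x = ((a : ZMod (2 ^ r)) * x.1, ((a⁻¹ : (ZMod (2 ^ r))ˣ) : ZMod (2 ^ r)) * x.2)) ∨
      (∃ b : (ZMod (2 ^ r))ˣ, ∀ x : ZMod (2 ^ r) × ZMod (2 ^ r),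
          γ x = ((b : ZMod (2 ^ r)) * x.2, ((b⁻¹ : (ZMod (2 ^ r))ˣ) : ZMod (2 ^ r)) * x.1))) ∧
    Nat.card (isomE r) = 2 ^ r ∧
    (3 ≤ r → ∃ φ : Multiplicative (ZMod 2) →*
        MulAut (Multiplicative (ZMod 2) × Multiplicative (ZMod (2 ^ (r - 2)))),
      Nonempty ((isomE r) ≃*
        (Multiplicative (ZMod 2) × Multiplicative (ZMod (2 ^ (r - 2)))) ⋊[φ]
          Multiplicative (ZMod 2))) := by
  refine ⟨fun γ hγ => classify hr γ hγ, card_isomE r hr, fun hr3 => ?_⟩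
  exact ⟨φP r, ⟨((MulEquiv.ofBijective (Φ r) (Φ_bij r hr)).symm).trans (sdCongr r hr3)⟩⟩
end

section
/- The 3×3 integer matrix K = [[(2^r+2)/3, 0, 1], [0, 2, -1], [1, -1, 2]], for even r ≥ 2 (so that 3 divides 2^r+2), is even, positive definite, has determinant 2^r, and its cokernel Z³/K(Z³) is cyclic of order 2^r. -/
/-- For even `r ≥ 2` (so that `3 ∣ 2^r + 2`), the matrix
`K = [[(2^r+2)/3, 0, 1], [0, 2, -1], [1, -1, 2]]` is even, positive definite,
has determinant `2^r`, and its cokernel `ℤ³/K(ℤ³)` is cyclic of order `2^r`. -/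
theorem stmt_17 (r : ℕ) (hr : 2 ≤ r) (hre : Even r)
    (K : Matrix (Fin 3) (Fin 3) ℤ)
    (hK : K = !![((2 ^ r + 2) / 3 : ℤ), 0, 1; 0, 2, -1; 1, -1, 2]) :
    (∀ i, Even (K i i)) ∧
    (K.map ((↑·) : ℤ → ℝ)).PosDef ∧
    K.det = 2 ^ r ∧
    Nonempty (((Fin 3 → ℤ) ⧸ LinearMap.range K.mulVecLin) ≃+ ZMod (2 ^ r)) := by
  -- basic arithmetic
  have h3 : (3 : ℤ) ∣ 2 ^ r + 2 := by
    obtain ⟨s, rfl⟩ := hre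
    have h4 : (3:ℤ) ∣ 4 ^ s - 1 := by simpa using sub_dvd_pow_sub_pow (4:ℤ) 1 s
    have h44 : (2:ℤ) ^ (s + s) = 4 ^ s := by rw [pow_add]; norm_num [← mul_pow]
    rw [h44]; omega
  have ha : 3 * ((2 ^ r + 2) / 3 : ℤ) = 2 ^ r + 2 := Int.mul_ediv_cancel' h3
  have hm : (2:ℤ) ^ r = 2 * 2 ^ (r - 1) := by
    rw [← pow_succ']; congr 1; omega
  have haeven : Even ((2 ^ r + 2) / 3 : ℤ) := by
    rcases Int.even_mul.mp (show Even (3 * ((2 ^ r + 2) / 3 : ℤ)) from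
        ⟨2 ^ (r - 1) + 1, by rw [ha, hm]; ring⟩) with h | h
    · exact absurd h (by decide)
    · exact h
  obtain ⟨b, hb⟩ := haeven
  have h6b : 6 * b = 2 ^ r + 2 := by rw [← ha, hb]; ring
  have hab : ((2 ^ r + 2) / 3 : ℤ) = 2 * b := by rw [hb]; ring
  have h4le : (4:ℤ) ≤ 2 ^ r := by
    calc (4:ℤ) = 2 ^ 2 := by norm_num
    _ ≤ 2 ^ r := pow_le_pow_right₀ (by norm_num) hr
  have hble : (2:ℤ) ≤ 2 * b := by linarith
  refine ⟨?_, ?_, ?_, ?_⟩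
  · -- even diagonal
    intro i
    fin_cases i <;> simp [hK, hab] <;>
      first
      | exact ⟨b, by ring⟩
      | decide
  · -- positive definite
    rw [Matrix.posDef_iff_dotProduct_mulVec]
    constructor
    · subst hK
      ext i j
      fin_cases i <;> fin_cases j <;>
        simp [Matrix.conjTranspose_apply, Matrix.map_apply]
    · intro x hx
      have hc : (1:ℝ) ≤ ((b : ℤ) : ℝ) := by
        exact_mod_cast (by linarith : (1:ℤ) ≤ b)
      have hcases : x 0 ≠ 0 ∨ x 1 ≠ 0 ∨ x 2 ≠ 0 := by
        by_contra h
        push_neg at h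
        exact hx (funext fun i => by fin_cases i <;> simp [h.1, h.2.1, h.2.2])
      simp [hK, hab, Matrix.mulVec, dotProduct, Fin.sum_univ_three,
        Matrix.map_apply]
      push_cast
      set c : ℝ := ((b : ℤ) : ℝ) with hcdef
      rcases hcases with hi | hi | hi
      · nlinarith [sq_nonneg (x 0 + x 2), sq_nonneg (x 1 - x 2), sq_nonneg (x 1),
          mul_pos (show (0:ℝ) < 2 * c - 1 by linarith) (mul_self_pos.mpr hi)]
      · nlinarith [sq_nonneg (x 0 + x 2), sq_nonneg (x 1 - x 2),
          mul_self_pos.mpr hi,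
          mul_nonneg (show (0:ℝ) ≤ 2 * c - 1 by linarith) (mul_self_nonneg (x 0))]
      · nlinarith [sq_nonneg (2 * c * x 0 + x 2),
          mul_nonneg (show (0:ℝ) ≤ c by linarith) (sq_nonneg (2 * x 1 - x 2)),
          mul_pos (show (0:ℝ) < 3 * c - 1 by linarith) (mul_self_pos.mpr hi),
          hc]
  · -- determinant
    rw [hK]
    simp [Matrix.det_fin_three]
    linear_combination ha
  · -- cokernel
    haveI : NeZero (2 ^ r) := ⟨pow_ne_zero _ two_ne_zero⟩
    set φ : (Fin 3 → ℤ) →ₗ[ℤ] ZMod (2 ^ r) :=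
      { toFun := fun v => ((-3 * v 0 + v 1 + 2 * v 2 : ℤ) : ZMod (2 ^ r))
        map_add' := by intro u v; push_cast [Pi.add_apply]; ring
        map_smul' := by
          intro z v
          simp only [Pi.smul_apply, smul_eq_mul, RingHom.id_apply, zsmul_eq_mul]
          push_cast
          ring } with hφ
    have hφsurj : Function.Surjective φ := by
      intro z
      obtain ⟨m, hmz⟩ := ZMod.intCast_surjective (n := 2 ^ r) z
      exact ⟨![0, m, 0], by simpa [hφ] using hmz⟩
    have hker : LinearMap.ker φ = LinearMap.range K.mulVecLin := by
      ext v
      simp only [LinearMap.mem_ker, LinearMap.mem_range]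
      constructor
      · intro hv
        simp only [hφ, LinearMap.coe_mk, AddHom.coe_mk] at hv
        rw [ZMod.intCast_zmod_eq_zero_iff_dvd] at hv
        obtain ⟨k, hk⟩ := hv
        push_cast at hk
        have h3b : 3 * b = 2 ^ (r - 1) + 1 := by linarith
        refine ⟨![-k, 2 ^ (r - 1) * k - v 2 + 2 * v 0 + b * k, v 0 + 2 * b * k], ?_⟩
        funext i
        rw [Matrix.mulVecLin_apply, hK]
        fin_cases i <;>
          simp [Matrix.mulVec, dotProduct, Fin.sum_univ_three]
        · linear_combination (-k) * hab
        · linear_combination (-1 : ℤ) * hk + (-k) * hm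
        · linear_combination k * h3b
      · rintro ⟨x, rfl⟩
        rw [Matrix.mulVecLin_apply, hK]
        simp only [hφ, LinearMap.coe_mk, AddHom.coe_mk]
        rw [ZMod.intCast_zmod_eq_zero_iff_dvd]
        simp [Matrix.mulVec, dotProduct, Fin.sum_univ_three, Matrix.vecHead]
        push_cast
        refine ⟨-x 0, ?_⟩
        linear_combination (-(x 0)) * ha
    exact ⟨((Submodule.quotEquivOfEq _ _ hker.symm).trans
      (φ.quotKerEquivOfSurjective hφsurj)).toAddEquiv⟩
end

section
/- For r ≥ 1, the matrix W = [[1/2^r, 1, 0], [1, 2^r, 1], [0, 1, -2]] (rational symmetric tridiagonal) has determinant ±1/2^r, its inverse K = W⁻¹ is an integral matrix with even diagonal entries, |det K| = 2^r, the cokernel Z³/K(Z³) is cyclic of order 2^r, and K has signature 1. -/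
lemma sign_count_aux (a b c : ℝ) (hp : a * b * c < 0) (hs : 0 < a + b + c) :
    ((if 0 < a then 1 else 0) + (if 0 < b then 1 else 0) + (if 0 < c then 1 else 0) : ℤ)
      - ((if a < 0 then 1 else 0) + (if b < 0 then 1 else 0) + (if c < 0 then 1 else 0)) = 1 := by
  rcases lt_trichotomy a 0 with ha | ha | ha <;>
    rcases lt_trichotomy b 0 with hb | hb | hb <;>
    rcases lt_trichotomy c 0 with hc | hc | hc <;>
    simp_all [not_lt.2 ha.le, not_lt.2 hb.le, not_lt.2 hc.le] <;>
    first
      | nlinarith [mul_pos (mul_pos_of_neg_of_neg ha hb) hc]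
      | nlinarith [mul_pos (mul_pos_of_neg_of_neg hb hc) ha]
      | nlinarith [mul_pos ha (mul_pos_of_neg_of_neg hb hc)]
      | nlinarith [mul_pos (mul_pos ha hb) hc]
      | nlinarith [mul_pos (mul_pos_of_neg_of_neg ha hc) hb]
      | nlinarith

/-- For `r ≥ 1`, the rational symmetric tridiagonal matrix
`W = [[1/2^r, 1, 0], [1, 2^r, 1], [0, 1, -2]]` has determinant `±1/2^r`; its
inverse `K = W⁻¹` is an integral matrix with even diagonal entries,
`|det K| = 2^r`, the cokernel `ℤ³/K(ℤ³)` is cyclic of order `2^r`, and `K` has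
signature `1`. -/
theorem stmt_18 (r : ℕ) (hr : 1 ≤ r)
    (W : Matrix (Fin 3) (Fin 3) ℚ)
    (hW : W = !![(1 / 2 ^ r : ℚ), 1, 0; 1, (2 ^ r : ℚ), 1; 0, 1, -2]) :
    (W.det = 1 / 2 ^ r ∨ W.det = -(1 / 2 ^ r)) ∧
    ∃ K : Matrix (Fin 3) (Fin 3) ℤ,
      K.map ((↑·) : ℤ → ℚ) = W⁻¹ ∧
      (∀ i, Even (K i i)) ∧
      |K.det| = 2 ^ r ∧
      Nonempty (((Fin 3 → ℤ) ⧸ LinearMap.range K.mulVecLin) ≃+ ZMod (2 ^ r)) ∧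
      (∀ h : (K.map ((↑·) : ℤ → ℝ)).IsHermitian,
        ((Finset.univ.filter fun i => 0 < h.eigenvalues i).card : ℤ) -
          ((Finset.univ.filter fun i => h.eigenvalues i < 0).card : ℤ) = 1) := by
  have ht : (0:ℚ) < 2 ^ r := by positivity
  set t : ℤ := 2 ^ r with htdef
  set K : Matrix (Fin 3) (Fin 3) ℤ :=
    !![2 * t ^ 2 + t, -2 * t, -t; -2 * t, 2, 1; -t, 1, 0] with hK
  have hdet : W.det = -(1 / 2 ^ r) := by
    subst hW
    rw [Matrix.det_fin_three]
    simp
    field_simp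
    ring
  have hKdet : K.det = -t := by
    rw [hK, Matrix.det_fin_three]; simp; ring
  refine ⟨Or.inr hdet, K, ?_, ?_, ?_, ?_, ?_⟩
  · -- K.map = W⁻¹
    have hpow : ((1:ℚ)/2)^r * (2:ℚ)^r = 1 := by
      rw [div_pow, one_pow, one_div, inv_mul_cancel₀ (by positivity : (2:ℚ)^r ≠ 0)]
    have hmul : W * K.map ((↑·) : ℤ → ℚ) = 1 := by
      subst hW
      ext i j
      fin_cases i <;> fin_cases j <;>
        (simp [Matrix.mul_apply, Fin.sum_univ_three, hK, htdef]
         try push_cast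
         try rw [hpow]
         try field_simp
         try ring)
    exact (Matrix.inv_eq_right_inv hmul).symm
  · -- even diagonal
    obtain ⟨s, hs⟩ : (2:ℤ) ∣ t := dvd_pow_self 2 (by omega)
    intro i
    fin_cases i <;> simp [hK] <;>
      exact ⟨t ^ 2 + s, by rw [hs]; ring⟩
  · -- |det| = 2^r
    rw [hKdet, abs_neg, abs_of_nonneg (by positivity), htdef]
  · -- cokernel
    haveI : NeZero (2 ^ r) := ⟨by positivity⟩
    have hcast : ((t:ℤ) : ZMod (2 ^ r)) = 0 := by
      rw [htdef]; push_cast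
      exact_mod_cast ZMod.natCast_self (2 ^ r)
    let φ : (Fin 3 → ℤ) →ₗ[ℤ] ZMod (2 ^ r) :=
      { toFun := fun x => ((x 0 : ℤ) : ZMod (2 ^ r))
        map_add' := by intro x y; simp
        map_smul' := by intro c x; simp }
    have hker : LinearMap.ker φ = LinearMap.range K.mulVecLin := by
      ext x
      simp only [LinearMap.mem_ker, LinearMap.mem_range, LinearMap.coe_mk, AddHom.coe_mk, φ]
      constructor
      · intro hx
        obtain ⟨m, hm⟩ := (ZMod.intCast_zmod_eq_zero_iff_dvd (x 0) (2 ^ r)).mp hx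
        have hm' : x 0 = t * m := by rw [hm, htdef]; push_cast; ring
        refine ⟨![m + x 1, x 0 + t * x 1 + x 2, x 1 - 2 * x 2], ?_⟩
        funext i
        fin_cases i <;>
          (simp [hK, Matrix.mulVecLin, Matrix.mulVec, dotProduct,
             Fin.sum_univ_three]
           rw [hm']
           ring)
      · rintro ⟨v, rfl⟩
        have hv : K.mulVecLin v 0 = t * (2 * t * v 0 + v 0 - 2 * v 1 - v 2) := by
          simp [hK, Matrix.mulVecLin, Matrix.mulVec, dotProduct,
            Fin.sum_univ_three]
          ring
        rw [hv]
        push_cast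
        rw [show ((t:ℤ) : ZMod (2 ^ r)) = 0 from hcast]
        ring
    have hsurj : Function.Surjective φ := by
      intro z
      obtain ⟨m, rfl⟩ := ZMod.intCast_surjective z
      exact ⟨fun _ => m, rfl⟩
    exact ⟨((Submodule.quotEquivOfEq _ _ hker.symm).trans
      (φ.quotKerEquivOfSurjective hsurj)).toAddEquiv⟩
  · -- signature
    intro h
    set Kr := K.map ((↑·) : ℤ → ℝ) with hKr
    have htR : (0:ℝ) < (t:ℝ) := by rw [htdef]; positivity
    have hdetKr : Kr.det = -(t:ℝ) := by
      rw [hKr, Matrix.det_fin_three]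
      simp [Matrix.map_apply, hK]
      try push_cast
      try ring
    have htrKr : Kr.trace = 2 * (t:ℝ) ^ 2 + t + 2 := by
      rw [hKr, Matrix.trace_fin_three]
      simp [Matrix.map_apply, hK]
      try push_cast
      try ring
    have hp : h.eigenvalues 0 * h.eigenvalues 1 * h.eigenvalues 2 < 0 := by
      have hpe := h.det_eq_prod_eigenvalues
      rw [Fin.prod_univ_three] at hpe
      simp only [RCLike.ofReal_real_eq_id, id_eq] at hpe
      rw [← hpe, hdetKr]
      linarith
    have hs : 0 < h.eigenvalues 0 + h.eigenvalues 1 + h.eigenvalues 2 := by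
      have hte : Kr.trace = ∑ i, h.eigenvalues i := by
        conv_lhs => rw [h.spectral_theorem]
        rw [Unitary.conjStarAlgAut_apply, Matrix.trace_mul_cycle,
          Matrix.mem_unitaryGroup_iff'.mp h.eigenvectorUnitary.2, Matrix.one_mul,
          Matrix.trace_diagonal]
        simp
      rw [Fin.sum_univ_three] at hte
      rw [← hte, htrKr]
      nlinarith
    rw [Finset.card_filter, Finset.card_filter, Fin.sum_univ_three, Fin.sum_univ_three]
    push_cast
    exact sign_count_aux _ _ _ hp hs
end

section
/- Let S be an invertible real symmetric n×n matrix all of whose leading principal minors μ_k(S) are nonzero (regular). Then the signature of S equals Σ_{k=1}^{n} sign(μ_k(S)/μ_{k-1}(S)), where μ₀(S) = 1. -/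
open Matrix


noncomputable def lmin {n : ℕ} (S : Matrix (Fin n) (Fin n) ℝ) (k : ℕ) : ℝ :=
  if h : k ≤ n then (S.submatrix (Fin.castLE h) (Fin.castLE h)).det else 0

lemma key_s19 : ∀ (n : ℕ) (S : Matrix (Fin n) (Fin n) ℝ), Sᵀ = S →
    (∀ k, k ≤ n → lmin S k ≠ 0) →
    ∃ B : Matrix (Fin n) (Fin n) ℝ,
      S = Bᵀ * Matrix.diagonal (fun i : Fin n => lmin S (i + 1) / lmin S i) * B := by
  intro n
  induction n with
  | zero =>
    intro S _ _
    exact ⟨1, Subsingleton.elim _ _⟩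
  | succ n IH =>
    intro S hsym hreg
    set A : Matrix (Fin n) (Fin n) ℝ :=
      S.submatrix (Fin.castLE n.le_succ) (Fin.castLE n.le_succ) with hA
    have hlmA : ∀ k, k ≤ n → lmin A k = lmin S k := by
      intro k hk
      rw [lmin, lmin, dif_pos hk, dif_pos (hk.trans n.le_succ)]
      rfl
    have hAsym : Aᵀ = A := by
      ext i j
      exact congrFun (congrFun hsym _) _
    have hAreg : ∀ k, k ≤ n → lmin A k ≠ 0 := fun k hk => by
      rw [hlmA k hk]; exact hreg k (hk.trans n.le_succ)
    obtain ⟨B', hB'⟩ := IH A hAsym hAreg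
    have hdetA : A.det ≠ 0 := by
      have := hreg n n.le_succ
      rwa [lmin, dif_pos n.le_succ] at this
    have hdetAu : IsUnit A.det := isUnit_iff_ne_zero.mpr hdetA
    haveI : Invertible A := A.invertibleOfIsUnitDet hdetAu
    set e : Fin n ⊕ Fin 1 ≃ Fin (n + 1) := finSumFinEquiv with he
    set T : Matrix (Fin n ⊕ Fin 1) (Fin n ⊕ Fin 1) ℝ := S.submatrix e e with hT
    have hT11 : T.toBlocks₁₁ = A := rfl
    have hTsym : Tᵀ = T := by
      ext i j
      exact congrFun (congrFun hsym _) _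
    have hT21 : T.toBlocks₂₁ = (T.toBlocks₁₂)ᵀ := by
      ext i j
      show T (Sum.inr i) (Sum.inl j) = T (Sum.inl j) (Sum.inr i)
      exact (congrFun (congrFun hTsym (Sum.inr i)) (Sum.inl j)).symm
    set b : Matrix (Fin n) (Fin 1) ℝ := T.toBlocks₁₂ with hb
    set s : Matrix (Fin 1) (Fin 1) ℝ := T.toBlocks₂₂ - bᵀ * A⁻¹ * b with hs
    set L : Matrix (Fin n ⊕ Fin 1) (Fin n ⊕ Fin 1) ℝ := fromBlocks 1 (A⁻¹ * b) 0 1 with hL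
    have hAinvT : A⁻¹ᵀ = A⁻¹ := by rw [transpose_nonsing_inv, hAsym]
    have hfac : T = Lᵀ * fromBlocks A 0 0 s * L := by
      rw [hL, fromBlocks_transpose, fromBlocks_multiply, fromBlocks_multiply]
      rw [← fromBlocks_toBlocks T, hT11, hT21, ← hb, fromBlocks_inj]
      refine ⟨by simp, ?_, ?_, ?_⟩
      · simp [A.mul_nonsing_inv_cancel_left _ hdetAu]
      · simp [transpose_mul, hAinvT, Matrix.nonsing_inv_mul_cancel_right _ _ hdetAu]
      · simp [transpose_mul, hAinvT, hs, Matrix.nonsing_inv_mul_cancel_right _ _ hdetAu,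
          Matrix.mul_assoc]
    have hdetT : T.det = S.det := det_submatrix_equiv_self e S
    have hdetfac : S.det = A.det * s 0 0 := by
      rw [← hdetT, hfac]
      have h1 : (fromBlocks A 0 0 s).det = A.det * s.det := by
        rw [det_fromBlocks₁₁]
        congr 1
        simp
      have hls : L.det = 1 := by
        rw [hL, det_fromBlocks_zero₂₁]
        simp
      have hlts : (Lᵀ).det = 1 := by rw [det_transpose, hls]
      rw [det_mul, det_mul, hlts, h1, hls, Matrix.det_fin_one]
      ring
    set c : ℝ := lmin S (n + 1) / lmin S n with hc
    have hlS : lmin S (n + 1) = S.det := by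
      rw [lmin, dif_pos (le_refl (n + 1)),
        show Fin.castLE (le_refl (n + 1)) = id from funext fun i => rfl, submatrix_id_id]
    have hlA : lmin S n = A.det := by
      rw [lmin, dif_pos n.le_succ]
    have hsdiag : s = diagonal (fun _ : Fin 1 => c) := by
      ext i j
      fin_cases i <;> fin_cases j
      simp only [diagonal_apply_eq]
      rw [hc, hlS, hlA, hdetfac]
      field_simp
      rfl
    set dA : Fin n → ℝ := fun i => lmin A (i + 1) / lmin A i with hdA
    set N : Matrix (Fin n ⊕ Fin 1) (Fin n ⊕ Fin 1) ℝ := fromBlocks B' 0 0 1 with hN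
    have hmid : fromBlocks A 0 0 s = Nᵀ * fromBlocks (diagonal dA) 0 0 s * N := by
      rw [hN, fromBlocks_transpose, fromBlocks_multiply, fromBlocks_multiply]
      rw [fromBlocks_inj]
      refine ⟨by simpa using hB', by simp, by simp, by simp⟩
    set g : Fin n ⊕ Fin 1 → ℝ := Sum.elim dA (fun _ => c) with hg
    have hdiagg : fromBlocks (diagonal dA) 0 0 s = diagonal g := by
      rw [hsdiag, fromBlocks_diagonal]
    set M : Matrix (Fin n ⊕ Fin 1) (Fin n ⊕ Fin 1) ℝ := N * L with hM
    have hTfac : T = Mᵀ * diagonal g * M := by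
      rw [hM, transpose_mul, hfac, hmid, ← hdiagg]
      noncomm_ring
    have hge : ∀ j : Fin n ⊕ Fin 1,
        g j = lmin S ((e j : ℕ) + 1) / lmin S (e j : ℕ) := by
      rintro (j | j)
      · have : ((e (Sum.inl j) : Fin (n+1)) : ℕ) = (j : ℕ) := by
          simp [he]
        rw [this, hg]
        simp only [Sum.elim_inl, hdA]
        rw [hlmA _ j.isLt, hlmA _ j.isLt.le]
      · have hj : j = 0 := Subsingleton.elim _ _
        subst hj
        have : ((e (Sum.inr (0 : Fin 1)) : Fin (n+1)) : ℕ) = n := by simp [he]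
        rw [this, hg]
        simp [hc]
    refine ⟨M.submatrix e.symm e.symm, ?_⟩
    have hphi := congrArg (fun X => X.submatrix e.symm e.symm) hTfac
    have hTS : T.submatrix ⇑e.symm ⇑e.symm = S := by
      rw [hT, submatrix_submatrix, Equiv.self_comp_symm, submatrix_id_id]
    have hmul : (Mᵀ * diagonal g * M).submatrix ⇑e.symm ⇑e.symm =
        (Mᵀ).submatrix ⇑e.symm ⇑e.symm * (diagonal g).submatrix ⇑e.symm ⇑e.symm
          * M.submatrix ⇑e.symm ⇑e.symm := by
      rw [← submatrix_mul_equiv (Mᵀ * diagonal g) M ⇑e.symm e.symm ⇑e.symm,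
        ← submatrix_mul_equiv (Mᵀ) (diagonal g) ⇑e.symm e.symm ⇑e.symm]
    rw [hTS, hmul] at hphi
    have hfun : g ∘ ⇑e.symm = fun i : Fin (n+1) => lmin S ((i : ℕ) + 1) / lmin S (i : ℕ) := by
      funext i
      show g (e.symm i) = _
      rw [hge (e.symm i), Equiv.apply_symm_apply]
    have hgoal : (diagonal g).submatrix ⇑e.symm ⇑e.symm =
        diagonal (fun i : Fin (n+1) => lmin S ((i : ℕ) + 1) / lmin S (i : ℕ)) := by
      rw [submatrix_diagonal_equiv, hfun]
    rw [hgoal, ← transpose_submatrix] at hphi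
    exact hphi


lemma inertia_le {n : ℕ} (d e : Fin n → ℝ) (C : Matrix (Fin n) (Fin n) ℝ)
    (h : Matrix.diagonal e = Cᵀ * Matrix.diagonal d * C) :
    (Finset.univ.filter fun j => 0 < e j).card ≤
      (Finset.univ.filter fun i => 0 < d i).card := by
  classical
  set P := Finset.univ.filter fun j => 0 < e j with hP
  set Q := Finset.univ.filter fun i => 0 < d i with hQ
  by_contra hlt
  push_neg at hlt
  set C' : Matrix {i // i ∈ Q} {j // j ∈ P} ℝ :=
    C.submatrix (fun i => i.1) (fun j => j.1) with hC'
  have hnotinj : ¬ Function.Injective C'.mulVecLin := by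
    intro hinj
    have := LinearMap.finrank_le_finrank_of_injective hinj
    rw [Module.finrank_pi, Module.finrank_pi] at this
    simp only [Fintype.card_coe] at this
    omega
  rw [Function.not_injective_iff] at hnotinj
  obtain ⟨x, y, hxy, hne⟩ := hnotinj
  set z : {j // j ∈ P} → ℝ := x - y with hz
  have hz0 : C'.mulVecLin z = 0 := by
    rw [hz, map_sub, hxy, sub_self]
  have hzne : z ≠ 0 := sub_ne_zero_of_ne hne
  set v : Fin n → ℝ := fun j => if hj : j ∈ P then z ⟨j, hj⟩ else 0 with hv
  set w : Fin n → ℝ := C *ᵥ v with hw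
  -- w vanishes on Q
  have hwQ : ∀ i (hi : i ∈ Q), w i = 0 := by
    intro i hi
    have : w i = C'.mulVecLin z ⟨i, hi⟩ := by
      rw [hw]
      show ∑ j, C i j * v j = ∑ j, C' ⟨i, hi⟩ j * z j
      rw [← Finset.sum_subset (Finset.subset_univ P)
        (by intro j _ hj; rw [hv]; simp [dif_neg hj])]
      rw [← Finset.sum_attach P (fun j => C i j * v j)]
      refine Finset.sum_congr rfl fun j _ => ?_
      simp only [hv, hC', submatrix_apply]
      rw [dif_pos j.2]
    rw [this, hz0]
    rfl
  -- the quadratic form value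
  have hq1 : v ⬝ᵥ (Matrix.diagonal e *ᵥ v) = ∑ j, e j * v j ^ 2 := by
    rw [dotProduct]
    refine Finset.sum_congr rfl fun j _ => ?_
    rw [mulVec_diagonal]
    ring
  have hq2 : v ⬝ᵥ (Matrix.diagonal e *ᵥ v) = ∑ i, d i * w i ^ 2 := by
    rw [h, ← Matrix.mulVec_mulVec, ← Matrix.mulVec_mulVec, Matrix.dotProduct_mulVec,
      Matrix.vecMul_transpose, ← hw]
    rw [dotProduct]
    refine Finset.sum_congr rfl fun i _ => ?_
    rw [mulVec_diagonal]
    ring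
  have hpos : 0 < ∑ j, e j * v j ^ 2 := by
    apply Finset.sum_pos'
    · intro j _
      by_cases hj : j ∈ P
      · have : 0 < e j := by rw [hP] at hj; simpa using hj
        positivity
      · rw [hv]
        simp [dif_neg hj]
    · have : ∃ j : {j // j ∈ P}, z j ≠ 0 := by
        by_contra hc
        push_neg at hc
        exact hzne (funext fun j => hc j)
      obtain ⟨j, hj⟩ := this
      refine ⟨j.1, Finset.mem_univ _, ?_⟩
      have hvj : v j.1 = z j := by
        show (if hj : j.1 ∈ P then z ⟨j.1, hj⟩ else 0) = z j
        rw [dif_pos j.2]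
      have hej : 0 < e j.1 := (Finset.mem_filter.mp j.2).2
      rw [hvj]
      positivity
  have hnonpos : ∑ i, d i * w i ^ 2 ≤ 0 := by
    apply Finset.sum_nonpos
    intro i _
    by_cases hi : i ∈ Q
    · rw [hwQ i hi]; ring_nf; simp
    · have hdi : d i ≤ 0 := by
        rw [hQ] at hi; simp at hi; linarith
      have : 0 ≤ w i ^ 2 := sq_nonneg _
      exact mul_nonpos_of_nonpos_of_nonneg hdi this
  have heq := hq1.symm.trans hq2
  rw [heq] at hpos
  linarith


lemma trans_congr {n : ℕ} (S X Y : Matrix (Fin n) (Fin n) ℝ) (d e : Fin n → ℝ)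
    (hX : X.det ≠ 0) (h1 : S = Xᵀ * Matrix.diagonal d * X) (h2 : S = Yᵀ * Matrix.diagonal e * Y) :
    Matrix.diagonal d = (Y * X⁻¹)ᵀ * Matrix.diagonal e * (Y * X⁻¹) := by
  have hXu : IsUnit X.det := isUnit_iff_ne_zero.mpr hX
  have hXTu : IsUnit (Xᵀ).det := by rwa [det_transpose, isUnit_iff_ne_zero]
  have h3 : Xᵀ⁻¹ * S * X⁻¹ = Matrix.diagonal d := by
    rw [h1]
    calc Xᵀ⁻¹ * (Xᵀ * Matrix.diagonal d * X) * X⁻¹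
        = Xᵀ⁻¹ * Xᵀ * Matrix.diagonal d * (X * X⁻¹) := by
          simp only [Matrix.mul_assoc]
      _ = Matrix.diagonal d := by
          rw [Matrix.nonsing_inv_mul _ hXTu, Matrix.mul_nonsing_inv _ hXu, one_mul, mul_one]
  rw [← h3, h2, transpose_mul, transpose_nonsing_inv]
  simp only [Matrix.mul_assoc]

/-- Sylvester–Gundelfinger–Frobenius: if `S` is an invertible real symmetric
`n×n` matrix all of whose leading principal minors `μ_k(S)` are nonzero
(with `μ₀(S) = 1`), then the signature of `S` (number of positive eigenvalues
minus number of negative eigenvalues) equals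
`Σ_{k=1}^{n} sign(μ_k(S)/μ_{k-1}(S))`. -/
theorem stmt_19 (n : ℕ) (S : Matrix (Fin n) (Fin n) ℝ) (hS : S.IsHermitian)
    (hdet : S.det ≠ 0)
    (μ : ℕ → ℝ)
    (hμ : ∀ k (h : k ≤ n), μ k = (S.submatrix (Fin.castLE h) (Fin.castLE h)).det)
    (hμ0 : ∀ k, n < k → μ k = 0)
    (hreg : ∀ k, k ≤ n → μ k ≠ 0) :
    ((Finset.univ.filter fun i => 0 < hS.eigenvalues i).card : ℝ) -
      ((Finset.univ.filter fun i => hS.eigenvalues i < 0).card : ℝ) =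
      ∑ k ∈ Finset.range n, Real.sign (μ (k + 1) / μ k) := by
  classical
  have hsym : Sᵀ = S := by
    ext i j
    conv_rhs => rw [← hS]
    simp [conjTranspose_apply]
  have hlm : ∀ k (h : k ≤ n), lmin S k = μ k := by
    intro k h
    rw [lmin, dif_pos h, hμ k h]
  have hregS : ∀ k, k ≤ n → lmin S k ≠ 0 := by
    intro k h
    rw [hlm k h]
    exact hreg k h
  obtain ⟨B, hB⟩ := key_s19 n S hsym hregS
  set lam := hS.eigenvalues with hlam
  set dvec : Fin n → ℝ := fun i => lmin S ((i : ℕ) + 1) / lmin S (i : ℕ) with hdvec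
  -- spectral theorem
  obtain ⟨C, hC⟩ : ∃ C : Matrix (Fin n) (Fin n) ℝ, S = Cᵀ * diagonal lam * C := by
    refine ⟨(hS.eigenvectorUnitary : Matrix (Fin n) (Fin n) ℝ)ᵀ, ?_⟩
    have h := hS.spectral_theorem
    have h1 : (RCLike.ofReal ∘ hS.eigenvalues : Fin n → ℝ) = hS.eigenvalues := by
      funext i; simp [Function.comp]
    have h2 : star (hS.eigenvectorUnitary : Matrix (Fin n) (Fin n) ℝ) =
        (hS.eigenvectorUnitary : Matrix (Fin n) (Fin n) ℝ)ᵀ := by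
      ext i j; simp [Matrix.star_apply]
    rw [h1] at h
    simp only [Unitary.conjStarAlgAut_apply, Unitary.coe_star, h2] at h
    rw [transpose_transpose]
    exact h
  have hdetC : C.det ≠ 0 := by
    intro h0
    apply hdet
    rw [hC, det_mul, h0, mul_zero]
  have hdetB : B.det ≠ 0 := by
    intro h0
    apply hdet
    rw [hB, det_mul, h0, mul_zero]
  have e1 : Matrix.diagonal lam = (B * C⁻¹)ᵀ * Matrix.diagonal dvec * (B * C⁻¹) :=
    trans_congr S C B lam dvec hdetC hC hB
  have e2 : Matrix.diagonal dvec = (C * B⁻¹)ᵀ * Matrix.diagonal lam * (C * B⁻¹) :=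
    trans_congr S B C dvec lam hdetB hB hC
  have e1n : Matrix.diagonal (-lam) = (B * C⁻¹)ᵀ * Matrix.diagonal (-dvec) * (B * C⁻¹) := by
    rw [show (-lam) = (fun i => -(lam i)) from rfl, show (-dvec) = (fun i => -(dvec i)) from rfl,
      ← diagonal_neg, ← diagonal_neg, e1, mul_neg, neg_mul]
  have e2n : Matrix.diagonal (-dvec) = (C * B⁻¹)ᵀ * Matrix.diagonal (-lam) * (C * B⁻¹) := by
    rw [show (-lam) = (fun i => -(lam i)) from rfl, show (-dvec) = (fun i => -(dvec i)) from rfl,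
      ← diagonal_neg, ← diagonal_neg, e2, mul_neg, neg_mul]
  have i1 := inertia_le dvec lam (B * C⁻¹) e1
  have i2 := inertia_le lam dvec (C * B⁻¹) e2
  have i3 := inertia_le (-dvec) (-lam) (B * C⁻¹) e1n
  have i4 := inertia_le (-lam) (-dvec) (C * B⁻¹) e2n
  simp only [Pi.neg_apply, neg_pos] at i3 i4
  have hpos : (Finset.univ.filter fun i => 0 < lam i).card =
      (Finset.univ.filter fun i => 0 < dvec i).card := le_antisymm i1 i2
  have hneg : (Finset.univ.filter fun i => lam i < 0).card =
      (Finset.univ.filter fun i => dvec i < 0).card := le_antisymm i3 i4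
  -- compute the RHS
  have hdne : ∀ i : Fin n, dvec i ≠ 0 := by
    intro i
    exact div_ne_zero (hregS _ i.isLt) (hregS _ i.isLt.le)
  have hrhs : ∑ k ∈ Finset.range n, Real.sign (μ (k + 1) / μ k) =
      ∑ i : Fin n, Real.sign (dvec i) := by
    rw [← Fin.sum_univ_eq_sum_range (fun k => Real.sign (μ (k + 1) / μ k)) n]
    refine Finset.sum_congr rfl fun i _ => ?_
    rw [show μ ((i : ℕ) + 1) = lmin S ((i : ℕ) + 1) from (hlm _ i.isLt).symm,
      show μ (i : ℕ) = lmin S (i : ℕ) from (hlm _ i.isLt.le).symm]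
  have hsign : ∀ i : Fin n, Real.sign (dvec i) = if 0 < dvec i then (1 : ℝ) else -1 := by
    intro i
    by_cases h : 0 < dvec i
    · rw [if_pos h, Real.sign_of_pos h]
    · have hneg2 : dvec i < 0 := lt_of_le_of_ne (not_lt.mp h) (hdne i)
      rw [if_neg h, Real.sign_of_neg hneg2]
  have hfilter : Finset.univ.filter (fun i => ¬ 0 < dvec i) =
      Finset.univ.filter fun i => dvec i < 0 := by
    refine Finset.filter_congr fun i _ => ?_
    constructor
    · intro h
      exact lt_of_le_of_ne (not_lt.mp h) (hdne i)
    · intro h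
      exact not_lt.mpr h.le
  have hsum : ∑ i : Fin n, Real.sign (dvec i) =
      ((Finset.univ.filter fun i => 0 < dvec i).card : ℝ) -
        ((Finset.univ.filter fun i => dvec i < 0).card : ℝ) := by
    rw [Finset.sum_congr rfl fun i _ => hsign i, Finset.sum_ite, hfilter]
    simp [mul_comm]
    ring
  rw [hrhs, hsum, hpos, hneg]
end
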